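/- arXiv:1807.03859 — 6 statements merged into one kernel-verified Lean document; each statement's English description precedes it below -/
import Mathlib

section
/- Let α, β > 0 with α ≥ (3 + 2√2)β, and let λ⁺, λ⁻ be the roots of αβλ² + (α+β)λ + 2 = 0. Then −1/β < λ⁻ ≤ λ⁺ < −1/α. -/
theorem stmt_3 (α β : ℝ) (hα : 0 < α) (hβ : 0 < β)
    (hab : α ≥ (3 + 2*Real.sqrt 2)*β)
    (lp lm : ℝ)
    (hlp : lp = (-α - β + Real.sqrt (α^2 + β^2 - 6*α*β))/(2*α*β))
    (hlm : lm = (-α - β - Real.sqrt (α^2 + β^2 - 6*α*β))/(2*α*β)) :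
    -1/β < lm ∧ lm ≤ lp ∧ lp < -1/α := by
  have hr : Real.sqrt 2 ^ 2 = 2 := Real.sq_sqrt (by norm_num)
  have hr0 : (0:ℝ) ≤ Real.sqrt 2 := Real.sqrt_nonneg 2
  have h1 : (0:ℝ) ≤ α - (3 + 2*Real.sqrt 2)*β := by linarith
  have h2 : (0:ℝ) ≤ α - (3 - 2*Real.sqrt 2)*β := by nlinarith
  have hD : (0:ℝ) ≤ α^2 + β^2 - 6*α*β := by nlinarith [mul_nonneg h1 h2]
  set s := Real.sqrt (α^2 + β^2 - 6*α*β) with hsdef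
  have hs0 : 0 ≤ s := Real.sqrt_nonneg _
  have hs2 : s^2 = α^2 + β^2 - 6*α*β := Real.sq_sqrt hD
  have hba : β < α := by nlinarith
  have hslt : s < α - β := by
    rw [hsdef]
    rw [show α - β = Real.sqrt ((α-β)^2) from (Real.sqrt_sq (by linarith)).symm]
    apply Real.sqrt_lt_sqrt hD
    nlinarith
  have h2ab : (0:ℝ) < 2*α*β := by positivity
  subst hlp hlm
  refine ⟨?_, ?_, ?_⟩
  · rw [div_lt_div_iff₀ hβ h2ab]
    nlinarith
  · exact div_le_div_of_nonneg_right (by linarith) h2ab.le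
  · rw [div_lt_div_iff₀ h2ab hα]
    nlinarith
end

section
/- Let α, β > 0 with β < α < (3 + 2√2)β, and let λ satisfy −1/β < λ < −1/α. Then −1 < (1 + λα)(1 + λβ) < 0. -/
theorem stmt_6 (α β l : ℝ) (hα : 0 < α) (hβ : 0 < β)
    (h1 : β < α) (h2 : α < (3 + 2*Real.sqrt 2)*β)
    (h3 : -1/β < l) (h4 : l < -1/α) :
    -1 < (1 + l*α)*(1 + l*β) ∧ (1 + l*α)*(1 + l*β) < 0 := by
  have hs : Real.sqrt 2 ^ 2 = 2 := Real.sq_sqrt (by norm_num)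
  have hs1 : (1:ℝ) < Real.sqrt 2 := by nlinarith [Real.sqrt_nonneg 2]
  have hgap : (α - β)^2 < 4*α*β := by
    have p1 : (3 + 2*Real.sqrt 2)*β - α > 0 := by linarith
    have p2 : α - (3 - 2*Real.sqrt 2)*β > 0 := by nlinarith
    have key : ((3+2*Real.sqrt 2)*β - α)*(α-(3-2*Real.sqrt 2)*β) = 4*α*β - (α-β)^2 := by
      linear_combination (4*β^2) * hs
    nlinarith [mul_pos p1 p2]
  have hb : 1 + l*β > 0 := by
    have h := mul_lt_mul_of_pos_right h3 hβ
    rw [div_mul_cancel₀] at h <;> [linarith; positivity]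
  have ha : 1 + l*α < 0 := by
    have h := mul_lt_mul_of_pos_right h4 hα
    rw [div_mul_cancel₀] at h <;> [linarith; positivity]
  constructor
  · nlinarith [sq_nonneg (2*α*β*l + α + β), mul_pos hα hβ]
  · nlinarith
end

section
/- Let α, β > 0 and λ ∈ ℝ with λ ≠ 0 and 1 + λα > 0 and 1 + λβ > 0 (i.e., λ > 0 or max(−1/α, −1/β) < λ < 0). Define μ(n) = α for n even and μ(n) = β for n odd. Then for every ε > 0 and every φ : ℕ → ℝ satisfying |φ(n+1) − φ(n) − λ μ(n) φ(n)| ≤ ε μ(n) for all n, there exists x : ℕ → ℝ with x(n+1) = (1 + λ μ(n)) x(n) for all n, such that |φ(n) − x(n)| ≤ ε/|λ| for all n ∈ ℕ. -/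
/-!
Write `e(n) = ∏_{k<n} (1 + λ μ(k))`; the solutions of `x(n+1) = (1 + λ μ(n)) x(n)` are the
multiples `c e`. For `λ < 0` take `c = φ(0)`: the error `d = φ - φ(0) e` satisfies
`|d(n+1)| ≤ (1 + λ μ(n)) |d(n)| + ε μ(n)`, and `ε/|λ|` is a fixed point of this bound, so it is
never exceeded. For `λ > 0` the quotient `φ / e` moves by at most `(ε/λ) (1/e(n) - 1/e(n+1))`
per step, hence converges to some `c`, with `|φ(n)/e(n) - c| ≤ (ε/λ)/e(n)`.
-/

open Finset

-- The time-scale exponential `e_λ(n, 0)` for the graininess `μ`.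
def discreteExp (l : ℝ) (μ : ℕ → ℝ) (n : ℕ) : ℝ := ∏ k ∈ range n, (1 + l * μ k)

section
variable {l ε : ℝ} {μ φ : ℕ → ℝ}

@[simp] theorem discreteExp_zero : discreteExp l μ 0 = 1 := prod_range_zero _

theorem discreteExp_succ (n : ℕ) :
    discreteExp l μ (n + 1) = (1 + l * μ n) * discreteExp l μ n := by
  rw [discreteExp, prod_range_succ, mul_comm]; rfl

theorem discreteExp_pos (ha : ∀ n, 0 < 1 + l * μ n) (n : ℕ) : 0 < discreteExp l μ n :=
  prod_pos fun k _ => ha k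

theorem exists_dist_le_of_dist_succ_le_sub {X : Type*} [PseudoMetricSpace X] [CompleteSpace X]
    {f : ℕ → X} {g : ℕ → ℝ} (hg : ∀ n, 0 ≤ g n)
    (hf : ∀ n, dist (f n) (f (n + 1)) ≤ g n - g (n + 1)) :
    ∃ a, ∀ n, dist (f n) a ≤ g n := by
  set d : ℕ → ℝ := fun n => g n - g (n + 1)
  have hd : ∀ n, 0 ≤ d n := fun n => dist_nonneg.trans (hf n)
  have hpartial : ∀ n k, ∑ i ∈ range k, d (n + i) ≤ g n := fun n k => by
    have htele : ∑ i ∈ range k, d (n + i) = g n - g (n + k) := by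
      simpa only [d, add_assoc, add_zero] using sum_range_sub' (fun i => g (n + i)) k
    linarith [hg (n + k)]
  have hsum : Summable d := summable_of_sum_range_le hd (by simpa using hpartial 0)
  obtain ⟨a, ha⟩ := cauchySeq_tendsto_of_complete (cauchySeq_of_dist_le_of_summable d hf hsum)
  refine ⟨a, fun n => (dist_le_tsum_of_dist_le_of_tendsto d hf hsum ha n).trans ?_⟩
  exact Real.tsum_le_of_sum_range_le (fun i => hd (n + i)) (hpartial n)

theorem abs_sub_mul_discreteExp_le_of_neg (hl : l < 0) (ha : ∀ n, 0 ≤ 1 + l * μ n) (hε : 0 ≤ ε)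
    (hφ : ∀ n, |φ (n + 1) - φ n - l * μ n * φ n| ≤ ε * μ n) (n : ℕ) :
    |φ n - φ 0 * discreteExp l μ n| ≤ ε / |l| := by
  induction n with
  | zero => simpa using div_nonneg hε (abs_nonneg l)
  | succ n ih =>
    have hsplit : φ (n + 1) - φ 0 * discreteExp l μ (n + 1) =
        (φ (n + 1) - φ n - l * μ n * φ n) + (1 + l * μ n) * (φ n - φ 0 * discreteExp l μ n) := by
      rw [discreteExp_succ]; ring
    calc |φ (n + 1) - φ 0 * discreteExp l μ (n + 1)|
        ≤ ε * μ n + (1 + l * μ n) * (ε / |l|) := by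
          rw [hsplit]
          refine (abs_add_le _ _).trans (add_le_add (hφ n) ?_)
          rw [abs_mul, abs_of_nonneg (ha n)]
          exact mul_le_mul_of_nonneg_left ih (ha n)
      _ = ε / |l| := by have := hl.ne; rw [abs_of_neg hl]; field_simp; ring

theorem exists_abs_sub_mul_discreteExp_le_of_pos (hl : 0 < l) (ha : ∀ n, 0 < 1 + l * μ n)
    (hε : 0 ≤ ε) (hφ : ∀ n, |φ (n + 1) - φ n - l * μ n * φ n| ≤ ε * μ n) :
    ∃ c, ∀ n, |φ n - c * discreteExp l μ n| ≤ ε / |l| := by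
  set E := discreteExp l μ
  have hE : ∀ n, 0 < E n := discreteExp_pos ha
  have hsucc : ∀ n, E (n + 1) = (1 + l * μ n) * E n := discreteExp_succ
  have hstep : ∀ n,
      dist (φ n / E n) (φ (n + 1) / E (n + 1)) ≤ ε / l / E n - ε / l / E (n + 1) := by
    intro n
    have hn := (hE n).ne'
    have han := (ha n).ne'
    have hquot : φ (n + 1) / E (n + 1) - φ n / E n =
        (φ (n + 1) - φ n - l * μ n * φ n) / E (n + 1) := by
      rw [hsucc]; field_simp; ring
    have hbound : ε / l / E n - ε / l / E (n + 1) = ε * μ n / E (n + 1) := by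
      rw [hsucc]; field_simp; ring
    rw [Real.dist_eq, abs_sub_comm, hquot, hbound, abs_div, abs_of_pos (hE (n + 1))]
    exact div_le_div_of_nonneg_right (hφ n) (hE (n + 1)).le
  obtain ⟨c, hc⟩ := exists_dist_le_of_dist_succ_le_sub (fun n => by have := hE n; positivity) hstep
  refine ⟨c, fun n => ?_⟩
  have hn := (hE n).ne'
  calc |φ n - c * E n| = |(φ n / E n - c) * E n| := by congr 1; field_simp
    _ = |φ n / E n - c| * E n := by rw [abs_mul, abs_of_pos (hE n)]
    _ ≤ ε / l / E n * E n := mul_le_mul_of_nonneg_right (hc n) (hE n).le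
    _ = ε / |l| := by rw [abs_of_pos hl]; field_simp

theorem exists_abs_sub_mul_discreteExp_le (hl : l ≠ 0) (ha : ∀ n, 0 < 1 + l * μ n) (hε : 0 ≤ ε)
    (hφ : ∀ n, |φ (n + 1) - φ n - l * μ n * φ n| ≤ ε * μ n) :
    ∃ c, ∀ n, |φ n - c * discreteExp l μ n| ≤ ε / |l| := by
  rcases hl.lt_or_gt with hneg | hpos
  · exact ⟨φ 0, abs_sub_mul_discreteExp_le_of_neg hneg (fun n => (ha n).le) hε hφ⟩
  · exact exists_abs_sub_mul_discreteExp_le_of_pos hpos ha hε hφ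

end

theorem stmt_13_general (α β l : ℝ)
    (hl : l ≠ 0) (h1 : 0 < 1 + l*α) (h2 : 0 < 1 + l*β)
    (μ : ℕ → ℝ) (hμ : ∀ n, μ n = if Even n then α else β)
    (ε : ℝ) (hε : 0 < ε) (φ : ℕ → ℝ)
    (hφ : ∀ n, |φ (n+1) - φ n - l * μ n * φ n| ≤ ε * μ n) :
    ∃ x : ℕ → ℝ, (∀ n, x (n+1) = (1 + l * μ n) * x n) ∧
      ∀ n, |φ n - x n| ≤ ε / |l| := by
  have ha : ∀ n, 0 < 1 + l * μ n := fun n => by rw [hμ n]; split_ifs <;> assumption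
  obtain ⟨c, hc⟩ := exists_abs_sub_mul_discreteExp_le hl ha hε.le hφ
  refine ⟨fun n => c * discreteExp l μ n, fun n => ?_, hc⟩
  dsimp only
  rw [discreteExp_succ, mul_left_comm]

theorem stmt_13 (α β l : ℝ) (hα : 0 < α) (hβ : 0 < β)
    (hl : l ≠ 0) (h1 : 0 < 1 + l*α) (h2 : 0 < 1 + l*β)
    (μ : ℕ → ℝ) (hμ : ∀ n, μ n = if Even n then α else β)
    (ε : ℝ) (hε : 0 < ε) (φ : ℕ → ℝ)
    (hφ : ∀ n, |φ (n+1) - φ n - l * μ n * φ n| ≤ ε * μ n) :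
    ∃ x : ℕ → ℝ, (∀ n, x (n+1) = (1 + l * μ n) * x n) ∧
      ∀ n, |φ n - x n| ≤ ε / |l| :=
  stmt_13_general α β l hl h1 h2 μ hμ ε hε φ hφ
end

section
/- Let α, β > 0 and let λ satisfy −1/α − 1/β < λ < min(−1/α, −1/β). Define μ(n) = α for n even, β for n odd, and set K = max(1/β − 1/α − λ, 1/α − 1/β − λ)/(|λ|·(λ + 1/α + 1/β)). Then for every ε > 0 and every φ : ℕ → ℝ with |φ(n+1) − φ(n) − λ μ(n) φ(n)| ≤ ε μ(n) for all n, there exists x : ℕ → ℝ with x(n+1) = (1 + λ μ(n)) x(n) for all n and |φ(n) − x(n)| ≤ K ε for all n. -/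
/-!
Take the exact solution with the same initial value, `x n = (∏ i < n, (1 + l μ i)) φ 0`. The error
`e n = |φ n - x n|` obeys `e (n+1) ≤ ε μ n + |1 + l μ n| e n`, so it is dominated by any
supersolution of this affine recursion starting at a nonnegative value. Since both factors
`1 + l α`, `1 + l β` are negative with product in `(0, 1)`, the two-periodic recursion has a
nonnegative periodic solution `ε · (c_even, c_odd, c_even, …)`, and `K` is the larger of its two
values.
-/

open Finset

theorem abs_sub_le_of_linear_recurrence {φ x a δ M : ℕ → ℝ}
    (hx : ∀ n, x (n + 1) = a n * x n) (hx0 : x 0 = φ 0)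
    (hφ : ∀ n, |φ (n + 1) - a n * φ n| ≤ δ n)
    (hM0 : 0 ≤ M 0) (hM : ∀ n, δ n + |a n| * M n ≤ M (n + 1)) (n : ℕ) :
    |φ n - x n| ≤ M n := by
  induction n with
  | zero => simpa [hx0] using hM0
  | succ n ih =>
    calc |φ (n + 1) - x (n + 1)|
        = |(φ (n + 1) - a n * φ n) + a n * (φ n - x n)| := by rw [hx]; congr 1; ring
      _ ≤ |φ (n + 1) - a n * φ n| + |a n| * |φ n - x n| := by
          rw [← abs_mul]; exact abs_add_le _ _
      _ ≤ δ n + |a n| * M n := by gcongr; exact hφ n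
      _ ≤ M (n + 1) := hM n

/-- The value at the `a`-steps of the periodic solution of `M (n+1) = μ n + |1 + l μ n| M n`
when `μ` alternates `a, b, a, b, …`. -/
noncomputable def alternatingErrorBound (a b l : ℝ) : ℝ :=
  (1 / a - 1 / b - l) / (-l * (l + 1 / a + 1 / b))

noncomputable def alternatingErrorEnvelope (a b l : ℝ) (n : ℕ) : ℝ :=
  if Even n then alternatingErrorBound a b l else alternatingErrorBound b a l

section alternatingErrorBound

variable {a b l : ℝ}

theorem alternatingErrorBound_nonneg (ha : 0 < a)
    (hl : -1 / a - 1 / b < l) (hla : l < -1 / a) (hlb : l < -1 / b) :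
    0 ≤ alternatingErrorBound a b l := by
  have hinv : 0 < 1 / a := by positivity
  refine div_nonneg ?_ (mul_nonneg ?_ ?_)
  · rw [neg_div] at hlb; linarith
  · rw [neg_div] at hla; linarith
  · rw [neg_div] at hl; linarith

theorem alternatingErrorBound_le (ha : 0 < a)
    (hl : -1 / a - 1 / b < l) (hla : l < -1 / a) :
    alternatingErrorBound a b l ≤
      max (1 / b - 1 / a - l) (1 / a - 1 / b - l) / (|l| * (l + 1 / a + 1 / b)) := by
  have hl0 : l < 0 := by
    have : 0 < 1 / a := by positivity
    rw [neg_div] at hla; linarith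
  have hsum : 0 ≤ l + 1 / a + 1 / b := by rw [neg_div] at hl; linarith
  rw [alternatingErrorBound, abs_of_neg hl0]
  exact div_le_div_of_nonneg_right (le_max_right _ _) (mul_nonneg (by linarith) hsum)

theorem add_abs_mul_alternatingErrorBound (ha : 0 < a) (hb : 0 < b)
    (hl : -1 / a - 1 / b < l) (hla : l < -1 / a) :
    a + |1 + l * a| * alternatingErrorBound a b l = alternatingErrorBound b a l := by
  have hneg : 1 + l * a < 0 := by
    have := (lt_div_iff₀ ha).mp hla; linarith
  have hl0 : l ≠ 0 := by
    have : 0 < 1 / a := by positivity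
    rw [neg_div] at hla; linarith
  have hsum : l + 1 / a + 1 / b ≠ 0 := by rw [neg_div] at hl; linarith
  have hD : -l * (l + 1 / a + 1 / b) ≠ 0 := mul_ne_zero (neg_ne_zero.mpr hl0) hsum
  rw [abs_of_neg hneg, alternatingErrorBound, alternatingErrorBound, add_right_comm l (1 / b),
    eq_div_iff hD, add_mul, mul_assoc, div_mul_cancel₀ _ hD]
  field_simp
  ring

theorem alternatingErrorEnvelope_succ (ha : 0 < a) (hb : 0 < b)
    (hl : -1 / a - 1 / b < l) (hla : l < -1 / a) (hlb : l < -1 / b)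
    {μ : ℕ → ℝ} (hμ : ∀ n, μ n = if Even n then a else b) (n : ℕ) :
    μ n + |1 + l * μ n| * alternatingErrorEnvelope a b l n =
      alternatingErrorEnvelope a b l (n + 1) := by
  have hl' : -1 / b - 1 / a < l := by linarith [neg_div a 1, neg_div b 1]
  by_cases hn : Even n <;>
    simp only [alternatingErrorEnvelope, hμ n, Nat.even_add_one, hn, not_true_eq_false,
      not_false_eq_true, if_true, if_false]
  · exact add_abs_mul_alternatingErrorBound ha hb hl hla
  · exact add_abs_mul_alternatingErrorBound hb ha hl' hlb

theorem alternatingErrorEnvelope_le (ha : 0 < a) (hb : 0 < b)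
    (hl : -1 / a - 1 / b < l) (hla : l < -1 / a) (hlb : l < -1 / b) (n : ℕ) :
    alternatingErrorEnvelope a b l n ≤
      max (1 / b - 1 / a - l) (1 / a - 1 / b - l) / (|l| * (l + 1 / a + 1 / b)) := by
  have hl' : -1 / b - 1 / a < l := by linarith [neg_div a 1, neg_div b 1]
  unfold alternatingErrorEnvelope
  split_ifs
  · exact alternatingErrorBound_le ha hl hla
  · simpa only [max_comm, add_right_comm l] using alternatingErrorBound_le hb hl' hlb

end alternatingErrorBound

theorem stmt_14_general (α β l : ℝ) (hα : 0 < α) (hβ : 0 < β)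
    (h1 : -1/α - 1/β < l) (h2 : l < min (-1/α) (-1/β))
    (μ : ℕ → ℝ) (hμ : ∀ n, μ n = if Even n then α else β)
    (K : ℝ)
    (hK : K = max (1/β - 1/α - l) (1/α - 1/β - l) / (|l| * (l + 1/α + 1/β)))
    (ε : ℝ) (φ : ℕ → ℝ)
    (hφ : ∀ n, |φ (n+1) - φ n - l * μ n * φ n| ≤ ε * μ n) :
    ∃ x : ℕ → ℝ, (∀ n, x (n+1) = (1 + l * μ n) * x n) ∧
      ∀ n, |φ n - x n| ≤ K * ε := by
  obtain ⟨hlα, hlβ⟩ := lt_min_iff.mp h2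
  have hε : 0 ≤ ε := by
    have := (abs_nonneg _).trans (hφ 0)
    rw [hμ 0, if_pos Even.zero] at this
    exact nonneg_of_mul_nonneg_left this hα
  set x : ℕ → ℝ := fun n ↦ (∏ i ∈ range n, (1 + l * μ i)) * φ 0
  have hx : ∀ n, x (n + 1) = (1 + l * μ n) * x n := fun n ↦ by
    simp only [x, prod_range_succ]; ring
  refine ⟨x, hx, fun n ↦ ?_⟩
  have hM0 : 0 ≤ ε * alternatingErrorEnvelope α β l 0 := by
    rw [alternatingErrorEnvelope, if_pos Even.zero]
    exact mul_nonneg hε (alternatingErrorBound_nonneg hα h1 hlα hlβ)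
  calc |φ n - x n|
      ≤ ε * alternatingErrorEnvelope α β l n :=
        abs_sub_le_of_linear_recurrence (φ := φ) (δ := fun n ↦ ε * μ n)
          (M := fun n ↦ ε * alternatingErrorEnvelope α β l n) hx (by simp [x])
          (fun n ↦ by convert hφ n using 2; ring) hM0
          (fun n ↦ le_of_eq <| by
            rw [← alternatingErrorEnvelope_succ hα hβ h1 hlα hlβ hμ n]; ring) n
    _ ≤ ε * K := by rw [hK]; gcongr; exact alternatingErrorEnvelope_le hα hβ h1 hlα hlβ n
    _ = K * ε := mul_comm ε K

theorem stmt_14 (α β l : ℝ) (hα : 0 < α) (hβ : 0 < β)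
    (h1 : -1/α - 1/β < l) (h2 : l < min (-1/α) (-1/β))
    (μ : ℕ → ℝ) (hμ : ∀ n, μ n = if Even n then α else β)
    (K : ℝ)
    (hK : K = max (1/β - 1/α - l) (1/α - 1/β - l) / (|l| * (l + 1/α + 1/β)))
    (ε : ℝ) (hε : 0 < ε) (φ : ℕ → ℝ)
    (hφ : ∀ n, |φ (n+1) - φ n - l * μ n * φ n| ≤ ε * μ n) :
    ∃ x : ℕ → ℝ, (∀ n, x (n+1) = (1 + l * μ n) * x n) ∧
      ∀ n, |φ n - x n| ≤ K * ε :=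
  stmt_14_general α β l hα hβ h1 h2 μ hμ K hK ε φ hφ
end

section
/- Let α, β > 0 and λ < −1/α − 1/β. Define μ(n) = α for n even, β for n odd, and K = max(1/β − 1/α − λ, 1/α − 1/β − λ)/(|λ|·|λ + 1/α + 1/β|). Then for every ε > 0 and every φ : ℕ → ℝ with |φ(n+1) − φ(n) − λ μ(n) φ(n)| ≤ ε μ(n) for all n, there exists x : ℕ → ℝ with x(n+1) = (1 + λ μ(n)) x(n) for all n and |φ(n) − x(n)| ≤ K ε for all n. -/
/-!
Write `a n = 1 + λ μ(n)`. In case H both values of `a` are negative and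
`|a n * a (n+1)| = (1 + λα)(1 + λβ) > 1`, so solutions of `x (n+1) = a n * x n` grow geometrically
and the one shadowing `φ` is found by summing the defects `e n = φ (n+1) - a n * φ n` backwards:
`x n = φ n + ∑ₖ e (n+k) / (a n ⋯ a (n+k))`. With `|e m| ≤ ε μ(m)`, the distance `|φ n - x n|` is
bounded by a series that, split over even and odd `k`, is geometric with sum
`(1/α - 1/β - λ) / (|λ| |λ + 1/α + 1/β|) · ε` for even `n`, and the same with `α, β` swapped for
odd `n`.
-/

open Finset Function

theorem exists_solution_abs_sub_le_tsum (a φ w : ℕ → ℝ) (ha : ∀ n, a n ≠ 0)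
    (hφ : ∀ n, |φ (n + 1) - a n * φ n| ≤ w n)
    (hw : ∀ n, Summable fun k => w (n + k) / ∏ j ∈ range (k + 1), |a (n + j)|) :
    ∃ x : ℕ → ℝ, (∀ n, x (n + 1) = a n * x n) ∧
      ∀ n, |φ n - x n| ≤ ∑' k, w (n + k) / ∏ j ∈ range (k + 1), |a (n + j)| := by
  set f : ℕ → ℕ → ℝ := fun n k =>
    (φ (n + k + 1) - a (n + k) * φ (n + k)) / ∏ j ∈ range (k + 1), a (n + j) with hf
  have hf_le : ∀ n k, ‖f n k‖ ≤ w (n + k) / ∏ j ∈ range (k + 1), |a (n + j)| := fun n k => by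
    rw [Real.norm_eq_abs, hf, abs_div, abs_prod]
    exact div_le_div_of_nonneg_right (hφ _) (prod_nonneg fun _ _ => abs_nonneg _)
  have hf_sum : ∀ n, Summable (f n) := fun n => (hw n).of_norm_bounded (hf_le n)
  have hf_succ : ∀ n k, f n (k + 1) = f (n + 1) k / a n := fun n k => by
    have hprod :
        ∏ j ∈ range (k + 1 + 1), a (n + j) = a n * ∏ j ∈ range (k + 1), a (n + 1 + j) := by
      rw [prod_range_succ', mul_comm, add_zero]
      exact congrArg _ (prod_congr rfl fun j _ => congrArg a (by omega))
    simp only [hf, hprod, show n + (k + 1) = n + 1 + k by omega]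
    field_simp
  refine ⟨fun n => φ n + ∑' k, f n k, fun n => ?_, fun n => ?_⟩
  · have hf_zero : f n 0 = (φ (n + 1) - a n * φ n) / a n := by simp [hf]
    show φ (n + 1) + ∑' k, f (n + 1) k = a n * (φ n + ∑' k, f n k)
    rw [(hf_sum n).tsum_eq_zero_add, hf_zero]
    simp only [hf_succ, tsum_div_const]
    field_simp [ha n]
    ring
  · rw [sub_add_cancel_left, abs_neg, ← Real.norm_eq_abs]
    exact tsum_of_norm_bounded (hw n).hasSum (hf_le n)

lemma Function.Periodic.add_two_mul {β : Type*} {b : ℕ → β} (hb : Periodic b 2) (m k : ℕ) :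
    b (m + 2 * k) = b m := by
  simpa [mul_comm] using hb.nat_mul k m

lemma prod_range_two_mul_of_periodic {b : ℕ → ℝ} (hb : Periodic b 2) (n k : ℕ) :
    ∏ j ∈ range (2 * k), b (n + j) = (b n * b (n + 1)) ^ k := by
  induction k with
  | zero => simp
  | succ k ih =>
    rw [show 2 * (k + 1) = 2 * k + 1 + 1 by ring, prod_range_succ, prod_range_succ, ih,
      show n + (2 * k + 1) = n + 1 + 2 * k by ring, hb.add_two_mul, hb.add_two_mul]
    ring

lemma hasSum_div_prod_of_periodic {b c : ℕ → ℝ} (hb : Periodic b 2) (hc : Periodic c 2) (n : ℕ)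
    (hP : 1 < b n * b (n + 1)) :
    HasSum (fun k => c (n + k) / ∏ j ∈ range (k + 1), b (n + j))
      ((c n * b (n + 1) + c (n + 1)) / (b n * b (n + 1) - 1)) := by
  have hbn : b n ≠ 0 := fun h0 => by simp [h0] at hP; linarith
  have hbn1 : b (n + 1) ≠ 0 := fun h0 => by simp [h0] at hP; linarith
  have hgeom : HasSum (fun k => ((b n * b (n + 1))⁻¹) ^ k) (1 - (b n * b (n + 1))⁻¹)⁻¹ :=
    hasSum_geometric_of_lt_one (by positivity) (inv_lt_one_of_one_lt₀ hP)
  have h_even : ∀ k, c (n + 2 * k) / ∏ j ∈ range (2 * k + 1), b (n + j) =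
      c n / b n * ((b n * b (n + 1))⁻¹) ^ k := fun k => by
    rw [prod_range_succ, prod_range_two_mul_of_periodic hb, hb.add_two_mul, hc.add_two_mul,
      inv_pow]
    field_simp
  have h_odd : ∀ k, c (n + (2 * k + 1)) / ∏ j ∈ range (2 * k + 1 + 1), b (n + j) =
      c (n + 1) / (b n * b (n + 1)) * ((b n * b (n + 1))⁻¹) ^ k := fun k => by
    rw [prod_range_succ, prod_range_succ, prod_range_two_mul_of_periodic hb,
      show n + (2 * k + 1) = n + 1 + 2 * k by ring, hb.add_two_mul, hb.add_two_mul, hc.add_two_mul,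
      inv_pow]
    field_simp
  convert HasSum.even_add_odd (f := fun k => c (n + k) / ∏ j ∈ range (k + 1), b (n + j))
    (by simpa only [h_even] using hgeom.mul_left (c n / b n))
    (by simpa only [h_odd] using hgeom.mul_left (c (n + 1) / (b n * b (n + 1)))) using 1
  have : b n * b (n + 1) - 1 ≠ 0 := by linarith
  field_simp

lemma add_one_div_add_one_div_neg {α β l : ℝ} (h : l < -1/α - 1/β) : l + 1/α + 1/β < 0 := by
  linarith [show -1/α - 1/β = -(1/α) - 1/β by ring]

lemma one_add_mul_neg {α β l : ℝ} (hα : 0 < α) (hβ : 0 < β) (h : l < -1/α - 1/β) :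
    1 + l * α < 0 := by
  have hlα : l * α < (-1/α - 1/β) * α := mul_lt_mul_of_pos_right h hα
  have hexp : (-1/α - 1/β) * α = -1 - α / β := by field_simp
  have : 0 < α / β := by positivity
  linarith

lemma one_lt_abs_mul_abs {α β l : ℝ} (hα : 0 < α) (hβ : 0 < β) (h : l < -1/α - 1/β) :
    1 < |1 + l * α| * |1 + l * β| := by
  have hβα : l < -1/β - 1/α := h.trans_eq (by ring)
  rw [abs_of_neg (one_add_mul_neg hα hβ h), abs_of_neg (one_add_mul_neg hβ hα hβα),
    neg_mul_neg]
  have hexp : (1 + l * α) * (1 + l * β) - 1 = α * β * (l * (l + 1/α + 1/β)) := by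
    field_simp
    ring
  have : 0 < l * (l + 1/α + 1/β) :=
    mul_pos_of_neg_of_neg
      (by linarith [add_one_div_add_one_div_neg h, one_div_pos.2 hα, one_div_pos.2 hβ])
      (add_one_div_add_one_div_neg h)
  nlinarith [mul_pos hα hβ]

lemma div_abs_mul_abs_sub_one_eq {α β l : ℝ} (hα : 0 < α) (hβ : 0 < β) (h : l < -1/α - 1/β) :
    (α * |1 + l * β| + β) / (|1 + l * α| * |1 + l * β| - 1) =
      (1/α - 1/β - l) / (|l| * |l + 1/α + 1/β|) := by
  have hβα : l < -1/β - 1/α := h.trans_eq (by ring)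
  have hl : l < 0 := by
    linarith [add_one_div_add_one_div_neg h, one_div_pos.2 hα, one_div_pos.2 hβ]
  rw [abs_of_neg (one_add_mul_neg hα hβ h), abs_of_neg (one_add_mul_neg hβ hα hβα),
    abs_of_neg hl, abs_of_neg (add_one_div_add_one_div_neg h)]
  field_simp
  ring

theorem stmt_15 (α β l : ℝ) (hα : 0 < α) (hβ : 0 < β)
    (h : l < -1/α - 1/β)
    (μ : ℕ → ℝ) (hμ : ∀ n, μ n = if Even n then α else β)
    (K : ℝ)
    (hK : K = max (1/β - 1/α - l) (1/α - 1/β - l) / (|l| * |l + 1/α + 1/β|))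
    (ε : ℝ) (hε : 0 < ε) (φ : ℕ → ℝ)
    (hφ : ∀ n, |φ (n+1) - φ n - l * μ n * φ n| ≤ ε * μ n) :
    ∃ x : ℕ → ℝ, (∀ n, x (n+1) = (1 + l * μ n) * x n) ∧
      ∀ n, |φ n - x n| ≤ K * ε := by
  have hβα : l < -1/β - 1/α := h.trans_eq (by ring)
  have hμ_periodic : Periodic μ 2 := fun n => by simp only [hμ, Nat.even_add, even_two, iff_true]
  have hμ_pair : ∀ n, (μ n = α ∧ μ (n + 1) = β) ∨ (μ n = β ∧ μ (n + 1) = α) := fun n => by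
    rcases Nat.even_or_odd n with hn | hn
    · simp [hμ, hn, Nat.even_add_one]
    · simp [hμ, Nat.not_even_iff_odd.2 hn, Nat.even_add_one]
  have hP : ∀ n, 1 < |1 + l * μ n| * |1 + l * μ (n + 1)| := fun n => by
    rcases hμ_pair n with ⟨h0, h1⟩ | ⟨h0, h1⟩ <;> rw [h0, h1]
    · exact one_lt_abs_mul_abs hα hβ h
    · exact one_lt_abs_mul_abs hβ hα hβα
  have hsum := fun n => hasSum_div_prod_of_periodic (b := fun m => |1 + l * μ m|)
    (c := (ε * μ ·)) (fun m => by simp only [hμ_periodic m])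
    (fun m => by simp only [hμ_periodic m]) n (hP n)
  obtain ⟨x, hx, hdist⟩ := exists_solution_abs_sub_le_tsum (fun n => 1 + l * μ n) φ (ε * μ ·)
    (fun n => abs_ne_zero.1 (left_ne_zero_of_mul (one_pos.trans (hP n)).ne'))
    (fun n => (hφ n).trans_eq' (by ring_nf))
    (fun n => (hsum n).summable)
  refine ⟨x, hx, fun n => (hdist n).trans <| (hsum n).tsum_eq.trans_le ?_⟩
  rcases hμ_pair n with ⟨h0, h1⟩ | ⟨h0, h1⟩ <;> simp only [h0, h1]
  · calc (ε * α * |1 + l * β| + ε * β) / (|1 + l * α| * |1 + l * β| - 1)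
        = (1/α - 1/β - l) / (|l| * |l + 1/α + 1/β|) * ε := by
          rw [← div_abs_mul_abs_sub_one_eq hα hβ h]; ring
      _ ≤ K * ε := by rw [hK]; gcongr; exact le_max_right _ _
  · calc (ε * β * |1 + l * α| + ε * α) / (|1 + l * β| * |1 + l * α| - 1)
        = (1/β - 1/α - l) / (|l| * |l + 1/α + 1/β|) * ε := by
          rw [← add_right_comm, ← div_abs_mul_abs_sub_one_eq hβ hα hβα]; ring
      _ ≤ K * ε := by rw [hK]; gcongr; exact le_max_left _ _
end

section
/- Let α, β > 0 and set λ = −1/α − 1/β. Define e : ℕ → ℝ by e(2k) = 1 and e(2k+1) = −α/β for all k. Then e satisfies e(n+1) − e(n) = λ μ(n) e(n) for all n (with μ(n) = α for even n, β for odd n), and min(1, α/β) ≤ |e(n)| ≤ max(1, α/β) for all n. -/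
theorem stmt_17 (α β : ℝ) (hα : 0 < α) (hβ : 0 < β)
    (l : ℝ) (hl : l = -1/α - 1/β)
    (e : ℕ → ℝ) (he : ∀ k : ℕ, e (2*k) = 1 ∧ e (2*k+1) = -α/β)
    (μ : ℕ → ℝ) (hμ : ∀ n, μ n = if Even n then α else β) :
    (∀ n, e (n+1) - e n = l * μ n * e n) ∧
    ∀ n, min 1 (α/β) ≤ |e n| ∧ |e n| ≤ max 1 (α/β) := by
  have hα' := hα.ne'
  have hβ' := hβ.ne'
  constructor
  · intro n
    rcases Nat.even_or_odd n with ⟨k, hk⟩ | ⟨k, hk⟩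
    · subst hk
      have h1 := (he k).1
      have h2 := (he k).2
      rw [show k + k = 2*k by ring] at *
      rw [hμ, if_pos ⟨k, by ring⟩, h1, h2, hl]
      field_simp
      ring
    · subst hk
      have h1 := (he (k+1)).1
      have h2 := (he k).2
      rw [hμ, if_neg (by simp [Nat.not_even_iff_odd.mpr ⟨k, rfl⟩]),
        show 2*k+1+1 = 2*(k+1) by ring, h1, h2, hl]
      field_simp
      ring
  · intro n
    have hab : 0 < α/β := div_pos hα hβ
    rcases Nat.even_or_odd n with ⟨k, hk⟩ | ⟨k, hk⟩
    · have h1 := (he k).1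
      rw [show n = 2*k by omega, h1, abs_one]
      exact ⟨min_le_left _ _, le_max_left _ _⟩
    · have h2 := (he k).2
      rw [show n = 2*k+1 by omega, h2, abs_of_nonpos (by rw [neg_div]; exact neg_nonpos.mpr hab.le)]
      rw [show -(-α/β) = α/β by ring]
      exact ⟨min_le_right _ _, le_max_right _ _⟩
end
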